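/- (Most-powerful part of Theorem 6 of the paper.) In the finite-sample Bernoulli testing framework, suppose additionally that p̄ ∈ N(b) (this holds, for example, whenever X_i b ≠ 0 for every i). Then φ̄ is a most powerful level-α test of the composite null N(b) against the simple alternative p̃: every test φ : {0,1}^n → [0,1] with RP_φ(p) ≤ α for all p ∈ N(b) satisfies RP_φ(p̃) ≤ RP_{φ̄}(p̃). In particular, p̄ is a least favorable null distribution. -/
import Mathlib


/-- Likelihood of the binary outcome vector `y` under Bernoulli probabilities `p`. -/
def lik {n : ℕ} (p : Fin n → ℝ) (y : Fin n → Bool) : ℝ :=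
  ∏ i, if y i then p i else 1 - p i

/-- Rejection probability of the (possibly randomized) test `φ` under `p`. -/
def rejProb {n : ℕ} (φ : (Fin n → Bool) → ℝ) (p : Fin n → ℝ) : ℝ :=
  ∑ y : Fin n → Bool, φ y * lik p y

/-- The set `N(b)` of Bernoulli probability vectors compatible with the null `β = b`. -/
def nullSet {n K : ℕ} (X : Fin n → Fin K → ℝ) (b : Fin K → ℝ) : Set (Fin n → ℝ) :=
  {p | (∀ i, p i ∈ Set.Icc (0 : ℝ) 1) ∧
    ∀ i, (0 ≤ (∑ j, X i j * b j) → 1/2 ≤ p i) ∧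
         ((∑ j, X i j * b j) ≤ 0 → p i ≤ 1/2)}

/-- The least favorable null probabilities `p̄` paired with alternative `p̃`. -/
noncomputable def pbar {n K : ℕ} (X : Fin n → Fin K → ℝ) (b : Fin K → ℝ)
    (pt : Fin n → ℝ) : Fin n → ℝ :=
  fun i => if (∑ j, X i j * b j) * (pt i - 1/2) < 0 ∨
      ((∑ j, X i j * b j) = 0 ∧ pt i < 1/2) then 1/2 else pt i

/-- The likelihood ratio test `φ̄` of `p̄` against `p̃`, with constant `k` and
randomization `ξ`. -/
noncomputable def lrt {n : ℕ} (pt pb : Fin n → ℝ) (k ξ : ℝ)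
    (y : Fin n → Bool) : ℝ :=
  if k * lik pb y < lik pt y then 1
  else if lik pt y = k * lik pb y then ξ else 0

/-- Most-powerful part of Theorem 6: if moreover `p̄ ∈ N(b)`, then `φ̄` is a most
powerful level-`α` test of the composite null `N(b)` against the simple
alternative `p̃`. -/
theorem theorem6_most_powerful
    {n K : ℕ} (hn : 1 ≤ n)
    (X : Fin n → Fin K → ℝ) (b : Fin K → ℝ)
    (pt : Fin n → ℝ) (hpt : ∀ i, pt i ∈ Set.Ioo (0 : ℝ) 1)
    (α : ℝ) (hα : α ∈ Set.Ioo (0 : ℝ) 1)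
    (k ξ : ℝ) (hk : 0 ≤ k) (hξ : ξ ∈ Set.Icc (0 : ℝ) 1)
    (hcal : rejProb (lrt pt (pbar X b pt) k ξ) (pbar X b pt) = α)
    (hpbar : pbar X b pt ∈ nullSet X b) :
    ∀ φ : (Fin n → Bool) → ℝ, (∀ y, φ y ∈ Set.Icc (0 : ℝ) 1) →
      (∀ p ∈ nullSet X b, rejProb φ p ≤ α) →
      rejProb φ pt ≤ rejProb (lrt pt (pbar X b pt) k ξ) pt := by
  intro φ hφ hlev
  set pb := pbar X b pt with hpb
  set φb := lrt pt pb k ξ with hφb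
  have key : ∀ y : Fin n → Bool,
      0 ≤ (φb y - φ y) * (lik pt y - k * lik pb y) := by
    intro y
    obtain ⟨h0, h1⟩ := hφ y
    unfold φb
    unfold lrt
    split_ifs with h h'
    · nlinarith
    · simp [h']
    · push_neg at h
      nlinarith [lt_of_le_of_ne h h']
  have hsum : 0 ≤ ∑ y : Fin n → Bool, (φb y - φ y) * (lik pt y - k * lik pb y) :=
    Finset.sum_nonneg fun y _ => key y
  have expand : (∑ y : Fin n → Bool, (φb y - φ y) * (lik pt y - k * lik pb y)) =
      (rejProb φb pt - rejProb φ pt) - k * (rejProb φb pb - rejProb φ pb) := by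
    simp only [rejProb, Finset.mul_sum, ← Finset.sum_sub_distrib]
    exact Finset.sum_congr rfl fun y _ => by ring
  have hφpb : rejProb φ pb ≤ α := hlev pb hpbar
  have hk' : 0 ≤ k * (rejProb φb pb - rejProb φ pb) := by
    apply mul_nonneg hk
    rw [hcal]
    linarith
  linarith [expand ▸ hsum]
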